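/- Let (M, d) be a metric space, α ∈ (0,1) and ε > 0, and let w_{α,ε}, b_{α,ε} and b_α be as defined in the context. Then: (i) b_{α,ε} and b_α are metrics on M; (ii) (1−α)·d(x,y) ≤ b_{α,ε}(x,y) ≤ b_α(x,y) ≤ d(x,y) for all x, y ∈ M; and (iii) if x, y ∈ M are not ε-discretely connectable, then b_{α,ε}(x,y) ≥ (1−α)·d(x,y) + ε·min(α, 1−α). -/

import Mathlib

open Metric

/-- The modified distance `w_{α,ε}`: equal to `d(x,y)` if `d(x,y) ≥ ε` and to
`(1−α)·d(x,y)` if `d(x,y) < ε`. -/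
noncomputable def wFun (M : Type*) [MetricSpace M] (α ε : ℝ) (x y : M) : ℝ :=
  if dist x y < ε then (1 - α) * dist x y else dist x y

/-- The metric `b_{α,ε}`: the infimum of `Σ_i w_{α,ε}(p_i, p_{i+1})` over all finite
chains from `x` to `y`. -/
noncomputable def bFunEps (M : Type*) [MetricSpace M] (α ε : ℝ) (x y : M) : ℝ :=
  sInf { r : ℝ | ∃ (n : ℕ) (p : ℕ → M), p 0 = x ∧ p (n + 1) = y ∧
    r = ∑ i ∈ Finset.range (n + 1), wFun M α ε (p i) (p (i + 1)) }

/-- The metric `b_α = sup_{ε > 0} b_{α,ε}`. -/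
noncomputable def bFun (M : Type*) [MetricSpace M] (α : ℝ) (x y : M) : ℝ :=
  sSup { r : ℝ | ∃ ε : ℝ, 0 < ε ∧ r = bFunEps M α ε x y }

/-- `x` and `y` are ε-discretely connectable in `M`. -/
def EpsDiscretelyConnectable (M : Type*) [MetricSpace M] (ε : ℝ) (x y : M) : Prop :=
  ∃ (n : ℕ) (p : ℕ → M), p 0 = x ∧ p (n + 1) = y ∧
    (∀ i ≤ n, dist (p i) (p (i + 1)) < ε) ∧
    (∑ i ∈ Finset.range (n + 1), dist (p i) (p (i + 1))) < dist x y + ε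

section aux
variable {M : Type*} [MetricSpace M] {α ε : ℝ}

/-- The set of chain sums. -/
def chainSums (M : Type*) [MetricSpace M] (α ε : ℝ) (x y : M) : Set ℝ :=
  { r : ℝ | ∃ (n : ℕ) (p : ℕ → M), p 0 = x ∧ p (n + 1) = y ∧
    r = ∑ i ∈ Finset.range (n + 1), wFun M α ε (p i) (p (i + 1)) }

lemma bFunEps_eq (x y : M) : bFunEps M α ε x y = sInf (chainSums M α ε x y) := rfl

lemma wFun_symm (x y : M) : wFun M α ε x y = wFun M α ε y x := by
  simp [wFun, dist_comm]

lemma le_wFun (h0 : 0 ≤ α) (x y : M) : (1 - α) * dist x y ≤ wFun M α ε x y := by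
  unfold wFun; split
  · exact le_rfl
  · nlinarith [dist_nonneg (x := x) (y := y)]

lemma wFun_le_dist (h0 : 0 ≤ α) (x y : M) : wFun M α ε x y ≤ dist x y := by
  unfold wFun; split
  · nlinarith [dist_nonneg (x := x) (y := y)]
  · exact le_rfl

lemma wFun_self (hε : 0 < ε) (x : M) : wFun M α ε x x = 0 := by
  simp [wFun, hε]

lemma single_mem (x y : M) : wFun M α ε x y ∈ chainSums M α ε x y := by
  exact ⟨0, fun i => if i = 0 then x else y, by simp, by simp, by simp⟩

lemma chainSums_nonempty (x y : M) : (chainSums M α ε x y).Nonempty :=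
  ⟨_, single_mem x y⟩

lemma chain_sum_lb (h0 : 0 ≤ α) (h1 : α ≤ 1) (n : ℕ) (p : ℕ → M) :
    (1 - α) * dist (p 0) (p (n + 1)) ≤
      ∑ i ∈ Finset.range (n + 1), wFun M α ε (p i) (p (i + 1)) := by
  calc (1 - α) * dist (p 0) (p (n + 1))
      ≤ (1 - α) * ∑ i ∈ Finset.range (n + 1), dist (p i) (p (i + 1)) :=
        mul_le_mul_of_nonneg_left (dist_le_range_sum_dist p (n + 1)) (by linarith)
    _ = ∑ i ∈ Finset.range (n + 1), (1 - α) * dist (p i) (p (i + 1)) := Finset.mul_sum _ _ _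
    _ ≤ _ := Finset.sum_le_sum fun i _ => le_wFun h0 _ _

lemma chainSums_lb (h0 : 0 ≤ α) (h1 : α ≤ 1) (x y : M) :
    ∀ r ∈ chainSums M α ε x y, (1 - α) * dist x y ≤ r := by
  rintro r ⟨n, p, hp0, hp1, rfl⟩
  rw [← hp0, ← hp1]
  exact chain_sum_lb h0 h1 n p

lemma chainSums_bddBelow (h0 : 0 ≤ α) (h1 : α ≤ 1) (x y : M) :
    BddBelow (chainSums M α ε x y) :=
  ⟨(1 - α) * dist x y, chainSums_lb h0 h1 x y⟩

lemma le_bFunEps (h0 : 0 ≤ α) (h1 : α ≤ 1) (x y : M) :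
    (1 - α) * dist x y ≤ bFunEps M α ε x y :=
  le_csInf (chainSums_nonempty x y) (chainSums_lb h0 h1 x y)

lemma bFunEps_nonneg (h0 : 0 ≤ α) (h1 : α ≤ 1) (x y : M) : 0 ≤ bFunEps M α ε x y :=
  le_trans (by nlinarith [dist_nonneg (x := x) (y := y)]) (le_bFunEps h0 h1 x y)

lemma bFunEps_le_dist (h0 : 0 ≤ α) (h1 : α ≤ 1) (x y : M) :
    bFunEps M α ε x y ≤ dist x y :=
  le_trans (csInf_le (chainSums_bddBelow h0 h1 x y) (single_mem x y)) (wFun_le_dist h0 x y)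

lemma bFunEps_self (h0 : 0 ≤ α) (h1 : α ≤ 1) (hε : 0 < ε) (x : M) :
    bFunEps M α ε x x = 0 := by
  refine le_antisymm ?_ (bFunEps_nonneg h0 h1 x x)
  have := csInf_le (chainSums_bddBelow h0 h1 x x) (single_mem (α := α) (ε := ε) x x)
  rwa [wFun_self hε] at this

lemma chainSums_symm_subset (x y : M) : chainSums M α ε x y ⊆ chainSums M α ε y x := by
  rintro r ⟨n, p, hp0, hp1, rfl⟩
  refine ⟨n, fun i => p (n + 1 - i), by simpa using hp1, by simpa using hp0, ?_⟩
  rw [← Finset.sum_range_reflect (fun i => wFun M α ε (p i) (p (i + 1))) (n + 1)]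
  refine Finset.sum_congr rfl fun i hi => ?_
  simp only [Finset.mem_range] at hi
  have h1 : n + 1 - 1 - i = n - i := by omega
  have h2 : n + 1 - i = (n - i) + 1 := by omega
  have h3 : n + 1 - (i + 1) = n - i := by omega
  simp only [h1, h2, h3]
  exact wFun_symm _ _

lemma chainSums_symm (x y : M) : chainSums M α ε x y = chainSums M α ε y x :=
  Set.Subset.antisymm (chainSums_symm_subset x y) (chainSums_symm_subset y x)

lemma bFunEps_symm (x y : M) : bFunEps M α ε x y = bFunEps M α ε y x := by
  rw [bFunEps_eq, bFunEps_eq, chainSums_symm]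

lemma chainSums_add (x y z : M) {r s : ℝ} (hr : r ∈ chainSums M α ε x y)
    (hs : s ∈ chainSums M α ε y z) : r + s ∈ chainSums M α ε x z := by
  obtain ⟨n, p, hp0, hp1, rfl⟩ := hr
  obtain ⟨m, q, hq0, hq1, rfl⟩ := hs
  set P : ℕ → M := fun i => if i ≤ n then p i else q (i - (n + 1)) with hP
  refine ⟨n + 1 + m, P, by simpa [hP] using hp0, ?_, ?_⟩
  · have hc : ¬ (n + 1 + m + 1 ≤ n) := by omega
    have hc2 : n + 1 + m + 1 - (n + 1) = m + 1 := by omega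
    simp only [hP, hc, if_false, hc2, hq1]
  · have hsplit : n + 1 + m + 1 = (n + 1) + (m + 1) := by ring
    rw [hsplit, Finset.sum_range_add (fun i => wFun M α ε (P i) (P (i + 1))) (n + 1) (m + 1)]
    congr 1
    · refine Finset.sum_congr rfl fun i hi => ?_
      simp only [Finset.mem_range] at hi
      have h1 : i ≤ n := by omega
      by_cases h2 : i + 1 ≤ n
      · simp only [hP, h1, if_true, h2]
      · have hin : i = n := by omega
        subst hin
        have e0 : i + 1 - (i + 1) = 0 := by omega
        simp only [hP, h1, if_true, h2, if_false, e0, hq0, ← hp1]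
    · refine Finset.sum_congr rfl fun i hi => ?_
      have h1 : ¬ (n + 1 + i ≤ n) := by omega
      have h2 : ¬ (n + 1 + i + 1 ≤ n) := by omega
      have e1 : n + 1 + i - (n + 1) = i := by omega
      have e2 : n + 1 + i + 1 - (n + 1) = i + 1 := by omega
      simp only [hP, h1, h2, if_false, e1, e2]

lemma bFunEps_triangle (h0 : 0 ≤ α) (h1 : α ≤ 1) (x y z : M) :
    bFunEps M α ε x z ≤ bFunEps M α ε x y + bFunEps M α ε y z := by
  refine le_of_forall_pos_le_add fun δ hδ => ?_
  obtain ⟨a, ha, hlta⟩ := exists_lt_of_csInf_lt (chainSums_nonempty (α := α) (ε := ε) x y)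
    (lt_add_of_pos_right (sInf (chainSums M α ε x y)) (half_pos hδ))
  obtain ⟨b, hb, hltb⟩ := exists_lt_of_csInf_lt (chainSums_nonempty (α := α) (ε := ε) y z)
    (lt_add_of_pos_right (sInf (chainSums M α ε y z)) (half_pos hδ))
  have hmem := chainSums_add x y z ha hb
  have hle := csInf_le (chainSums_bddBelow h0 h1 x z) hmem
  simp only [bFunEps_eq] at *
  linarith

lemma bFunEps_lb_of_not_conn (h0 : 0 < α) (h1 : α < 1) (hε : 0 < ε) (x y : M)
    (h : ¬ EpsDiscretelyConnectable M ε x y) :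
    (1 - α) * dist x y + ε * min α (1 - α) ≤ bFunEps M α ε x y := by
  refine le_csInf (chainSums_nonempty x y) ?_
  rintro r ⟨n, p, hp0, hp1, rfl⟩
  have hmina : min α (1 - α) ≤ α := min_le_left _ _
  have hminb : min α (1 - α) ≤ 1 - α := min_le_right _ _
  have hdd : dist x y ≤ ∑ i ∈ Finset.range (n + 1), dist (p i) (p (i + 1)) := by
    rw [← hp0, ← hp1]; exact dist_le_range_sum_dist p (n + 1)
  by_cases hall : ∀ i ≤ n, dist (p i) (p (i + 1)) < ε
  · have hd : dist x y + ε ≤ ∑ i ∈ Finset.range (n + 1), dist (p i) (p (i + 1)) := by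
      by_contra hc
      push_neg at hc
      exact h ⟨n, p, hp0, hp1, hall, hc⟩
    have hw : ∑ i ∈ Finset.range (n + 1), wFun M α ε (p i) (p (i + 1)) =
        (1 - α) * ∑ i ∈ Finset.range (n + 1), dist (p i) (p (i + 1)) := by
      rw [Finset.mul_sum]
      refine Finset.sum_congr rfl fun i hi => ?_
      simp only [Finset.mem_range] at hi
      exact if_pos (hall i (by omega))
    rw [hw]
    nlinarith
  · push_neg at hall
    obtain ⟨j, hjn, hjd⟩ := hall
    have hj : j ∈ Finset.range (n + 1) := Finset.mem_range.2 (by omega)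
    have hsplitw := Finset.sum_erase_add (Finset.range (n + 1))
      (fun i => wFun M α ε (p i) (p (i + 1))) hj
    have hsplitd := Finset.sum_erase_add (Finset.range (n + 1))
      (fun i => dist (p i) (p (i + 1))) hj
    have hwj : wFun M α ε (p j) (p (j + 1)) = dist (p j) (p (j + 1)) :=
      if_neg (not_lt.2 hjd)
    have herase : ∑ i ∈ (Finset.range (n + 1)).erase j, (1 - α) * dist (p i) (p (i + 1)) ≤
        ∑ i ∈ (Finset.range (n + 1)).erase j, wFun M α ε (p i) (p (i + 1)) :=
      Finset.sum_le_sum fun i _ => le_wFun (le_of_lt h0) _ _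
    have hms : ∑ i ∈ (Finset.range (n + 1)).erase j, (1 - α) * dist (p i) (p (i + 1)) =
        (1 - α) * ∑ i ∈ (Finset.range (n + 1)).erase j, dist (p i) (p (i + 1)) :=
      (Finset.mul_sum _ _ _).symm
    set A := ∑ i ∈ (Finset.range (n + 1)).erase j, dist (p i) (p (i + 1)) with hA
    set B := dist (p j) (p (j + 1)) with hB
    have hkey : (1 - α) * A + B = (1 - α) * (A + B) + α * B := by ring
    have h4 : (1 - α) * dist x y ≤ (1 - α) * (A + B) := by
      apply mul_le_mul_of_nonneg_left _ (by linarith)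
      rw [hA, hB]
      have hs' := hsplitd
      simp only [hA, hB] at hs'
      linarith
    have h5 : α * ε ≤ α * B := mul_le_mul_of_nonneg_left hjd (le_of_lt h0)
    have h6 : ε * min α (1 - α) ≤ α * ε := by nlinarith
    calc (1 - α) * dist x y + ε * min α (1 - α)
        ≤ (1 - α) * (A + B) + α * B := by linarith
      _ = (1 - α) * A + B := hkey.symm
      _ ≤ ∑ i ∈ (Finset.range (n + 1)).erase j, wFun M α ε (p i) (p (i + 1)) + B := by
          linarith [hms ▸ herase]
      _ = ∑ i ∈ Finset.range (n + 1), wFun M α ε (p i) (p (i + 1)) := by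
          rw [← hwj] at *; simpa using hsplitw

/-- The sup set for bFun. -/
lemma supSet_nonempty (x y : M) :
    ({ r : ℝ | ∃ ε : ℝ, 0 < ε ∧ r = bFunEps M α ε x y }).Nonempty :=
  ⟨bFunEps M α 1 x y, 1, one_pos, rfl⟩

lemma supSet_bddAbove (h0 : 0 ≤ α) (h1 : α ≤ 1) (x y : M) :
    BddAbove { r : ℝ | ∃ ε : ℝ, 0 < ε ∧ r = bFunEps M α ε x y } := by
  refine ⟨dist x y, ?_⟩
  rintro r ⟨ε', hε', rfl⟩
  exact bFunEps_le_dist h0 h1 x y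

lemma bFunEps_le_bFun (h0 : 0 ≤ α) (h1 : α ≤ 1) (hε : 0 < ε) (x y : M) :
    bFunEps M α ε x y ≤ bFun M α x y :=
  le_csSup (supSet_bddAbove h0 h1 x y) ⟨ε, hε, rfl⟩

lemma bFun_le_dist (h0 : 0 ≤ α) (h1 : α ≤ 1) (x y : M) : bFun M α x y ≤ dist x y := by
  refine csSup_le (supSet_nonempty x y) ?_
  rintro r ⟨ε', hε', rfl⟩
  exact bFunEps_le_dist h0 h1 x y

end aux

/-- Properties of `b_{α,ε}` and `b_α` for `α ∈ (0,1)` and `ε > 0`: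
(i) they are metrics on `M`; (ii) `(1−α)·d ≤ b_{α,ε} ≤ b_α ≤ d`; (iii) if `x` and `y`
are not ε-discretely connectable then
`b_{α,ε}(x,y) ≥ (1−α)·d(x,y) + ε·min(α, 1−α)`. -/
theorem bFun_properties (M : Type*) [MetricSpace M] (α ε : ℝ)
    (hα : α ∈ Set.Ioo (0 : ℝ) 1) (hε : 0 < ε) :
    ((∀ x y : M, 0 ≤ bFunEps M α ε x y) ∧
     (∀ x y : M, bFunEps M α ε x y = bFunEps M α ε y x) ∧
     (∀ x y z : M, bFunEps M α ε x z ≤ bFunEps M α ε x y + bFunEps M α ε y z) ∧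
     (∀ x y : M, bFunEps M α ε x y = 0 ↔ x = y)) ∧
    ((∀ x y : M, 0 ≤ bFun M α x y) ∧
     (∀ x y : M, bFun M α x y = bFun M α y x) ∧
     (∀ x y z : M, bFun M α x z ≤ bFun M α x y + bFun M α y z) ∧
     (∀ x y : M, bFun M α x y = 0 ↔ x = y)) ∧
    (∀ x y : M, (1 - α) * dist x y ≤ bFunEps M α ε x y ∧
      bFunEps M α ε x y ≤ bFun M α x y ∧ bFun M α x y ≤ dist x y) ∧
    (∀ x y : M, ¬ EpsDiscretelyConnectable M ε x y →
      (1 - α) * dist x y + ε * min α (1 - α) ≤ bFunEps M α ε x y) := by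
  obtain ⟨h0, h1⟩ := hα
  have h0' : (0:ℝ) ≤ α := le_of_lt h0
  have h1' : α ≤ 1 := le_of_lt h1
  have heqz : ∀ (ε' : ℝ), 0 < ε' → ∀ x y : M, bFunEps M α ε' x y = 0 ↔ x = y := by
    intro ε' hε' x y
    constructor
    · intro hxy
      have := le_bFunEps (ε := ε') h0' h1' x y
      rw [hxy] at this
      have hd : dist x y ≤ 0 := by nlinarith [dist_nonneg (x := x) (y := y)]
      exact dist_le_zero.1 hd
    · rintro rfl
      exact bFunEps_self h0' h1' hε' x
  refine ⟨⟨fun x y => bFunEps_nonneg h0' h1' x y, fun x y => bFunEps_symm x y,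
    fun x y z => bFunEps_triangle h0' h1' x y z, heqz ε hε⟩, ⟨?_, ?_, ?_, ?_⟩, ?_, ?_⟩
  · intro x y
    exact le_trans (bFunEps_nonneg (ε := 1) h0' h1' x y)
      (bFunEps_le_bFun h0' h1' one_pos x y)
  · intro x y
    unfold bFun
    congr 1
    ext r
    constructor
    · rintro ⟨ε', hε', rfl⟩; exact ⟨ε', hε', bFunEps_symm (α := α) (ε := ε') x y⟩
    · rintro ⟨ε', hε', rfl⟩; exact ⟨ε', hε', bFunEps_symm (α := α) (ε := ε') y x⟩
  · intro x y z
    refine csSup_le (supSet_nonempty x z) ?_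
    rintro r ⟨ε', hε', rfl⟩
    calc bFunEps M α ε' x z ≤ bFunEps M α ε' x y + bFunEps M α ε' y z :=
          bFunEps_triangle h0' h1' x y z
      _ ≤ bFun M α x y + bFun M α y z :=
          add_le_add (bFunEps_le_bFun h0' h1' hε' x y) (bFunEps_le_bFun h0' h1' hε' y z)
  · intro x y
    constructor
    · intro hxy
      have hle := bFunEps_le_bFun (ε := ε) h0' h1' hε x y
      rw [hxy] at hle
      have := le_bFunEps (ε := ε) h0' h1' x y
      have hd : dist x y ≤ 0 := by nlinarith [dist_nonneg (x := x) (y := y)]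
      exact dist_le_zero.1 hd
    · rintro rfl
      refine le_antisymm ?_ ?_
      · refine csSup_le (supSet_nonempty x x) ?_
        rintro r ⟨ε', hε', rfl⟩
        exact le_of_eq (bFunEps_self h0' h1' hε' x)
      · exact le_trans (bFunEps_nonneg (ε := 1) h0' h1' x x)
          (bFunEps_le_bFun h0' h1' one_pos x x)
  · intro x y
    exact ⟨le_bFunEps h0' h1' x y, bFunEps_le_bFun h0' h1' hε x y,
      bFun_le_dist h0' h1' x y⟩
  · intro x y hnc
    exact bFunEps_lb_of_not_conn h0 h1 hε x y hnc
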